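/- Let O be an order in M_2(k) of the form [[O_k, I],[J, O_k]] for fractional ideals I, J of a discrete valuation ring O_k with IJ ⊆ O_k. Then O is the intersection of exactly two maximal orders of M_2(k) when the valuation of IJ equals 1, i.e., split local orders of level 1 are intersections of two maximal orders (Eichler orders). -/

import Mathlib

/-- An `O`-order of full rank in `M₂(k)`: a subalgebra which is a finitely
generated `O`-module spanning `M₂(k)` over `k`. -/
def IsOrderM2 (O k : Type*) [CommRing O] [Field k] [Algebra O k]
    (R : Subalgebra O (Matrix (Fin 2) (Fin 2) k)) : Prop :=
  (Subalgebra.toSubmodule R).FG ∧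
    Submodule.span k (R : Set (Matrix (Fin 2) (Fin 2) k)) = ⊤

/-- A maximal order in `M₂(k)`. -/
def IsMaximalOrderM2 (O k : Type*) [CommRing O] [Field k] [Algebra O k]
    (R : Subalgebra O (Matrix (Fin 2) (Fin 2) k)) : Prop :=
  IsOrderM2 O k R ∧ ∀ S, IsOrderM2 O k S → R ≤ S → R = S

/-!
With `c = π^m`, the order is `E = Λ(c) ⊓ Λ(πc)`, where `Λ(c) = [[O, c⁻¹O], [cO, O]]` is a
conjugate of `M₂(O)`. In an order containing the idempotents `e₀₀, e₁₁` the corner elements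
`e_ii A e_jj B e_ii = A_ij B_ji e_ii` are integral, so `A₀₁ B₁₀ ∈ O` for all `A, B` in it. For a
maximal order `M ⊇ E` this gives `πc A₀₁ ∈ O` and `c⁻¹ A₁₀ ∈ O` for all `A ∈ M`. Because the
level is one, either every `A ∈ M` has `c A₀₁ ∈ O`, and then `M = Λ(c)`, or some `A` does not; then
`(πc)⁻¹ B₁₀ ∈ O` for every `B ∈ M`, since otherwise `A₀₁ B₁₀ = π (c A₀₁) ((πc)⁻¹ B₁₀)` would be `π`
times a product of two non-integers, and `M = Λ(πc)`.
-/

open Matrix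

section OrdersContainingIdempotents

variable {O k n : Type*} [CommRing O] [Field k] [Algebra O k] [Fintype n] [DecidableEq n]
  {S : Subalgebra O (Matrix n n k)}

theorem single_apply_mem {i j : n} (hi : single i i 1 ∈ S) (hj : single j j 1 ∈ S)
    {A : Matrix n n k} (hA : A ∈ S) : single i j (A i j) ∈ S := by
  simpa using S.mul_mem (S.mul_mem hi hA) hj

theorem Matrix.span_eq_top_of_forall_single_mem {s : Set (Matrix n n k)}
    (h : ∀ i j, ∃ d ≠ 0, single i j d ∈ s) :
    Submodule.span k s = ⊤ := by
  refine eq_top_iff.mpr fun A _ => ?_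
  rw [matrix_eq_sum_single A]
  refine Submodule.sum_mem _ fun i _ => Submodule.sum_mem _ fun j _ => ?_
  obtain ⟨d, hd, hmem⟩ := h i j
  have hsingle : single i j (A i j) = (A i j / d) • single i j d := by
    rw [smul_single, smul_eq_mul, div_mul_cancel₀ _ hd]
  rw [hsingle]
  exact Submodule.smul_mem _ _ (Submodule.subset_span hmem)

variable [IsIntegrallyClosed O] [IsFractionRing O k]

theorem mem_range_of_single_mem (hS : (Subalgebra.toSubmodule S).FG) {j : n} {x : k}
    (hx : single j j x ∈ S) : x ∈ (algebraMap O k).range := by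
  rw [← diagonal_single] at hx
  have hint : IsIntegral O (Pi.single j x : n → k) :=
    (isIntegral_algHom_iff (diagonalAlgHom O) diagonal_injective).mp
      (IsIntegral.of_mem_of_fg S hS _ hx)
  simpa using IsIntegrallyClosed.isIntegral_iff.mp (hint.map (Pi.evalAlgHom O (fun _ => k) j))

theorem apply_mem_range_of_mem (hS : (Subalgebra.toSubmodule S).FG) {i : n}
    (hi : single i i 1 ∈ S) {A : Matrix n n k} (hA : A ∈ S) :
    A i i ∈ (algebraMap O k).range :=
  mem_range_of_single_mem hS (single_apply_mem hi hi hA)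

theorem apply_mul_apply_mem_range_of_mem (hS : (Subalgebra.toSubmodule S).FG) {i j : n}
    (hi : single i i 1 ∈ S) (hj : single j j 1 ∈ S) {A B : Matrix n n k} (hA : A ∈ S)
    (hB : B ∈ S) : A i j * B j i ∈ (algebraMap O k).range := by
  refine mem_range_of_single_mem hS (j := i) ?_
  simpa using S.mul_mem (single_apply_mem hi hj hA) (single_apply_mem hj hi hB)

end OrdersContainingIdempotents

theorem Set.pair_eq_pair_of_inf_eq {α : Type*} [SemilatticeInf α] {P : α → Prop} {a b x y : α}
    (h : ∀ z, P z → a ⊓ b ≤ z → z = a ∨ z = b) (ha : a ⊓ b ≠ a) (hb : a ⊓ b ≠ b)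
    (hx : P x) (hy : P y) (hxy : x ⊓ y = a ⊓ b) : ({x, y} : Set α) = {a, b} := by
  rcases h x hx (hxy ▸ inf_le_left) with rfl | rfl <;>
    rcases h y hy (hxy ▸ inf_le_right) with rfl | rfl
  · exact absurd (hxy.symm.trans (inf_idem _)) ha
  · rfl
  · exact Set.pair_comm _ _
  · exact absurd (hxy.symm.trans (inf_idem _)) hb

section StandardOrder

/-- `[[O, c⁻¹O], [cO, O]]`, i.e. `D M₂(O) D⁻¹` for `D = diag(1, c)`. -/
def standardOrder (O : Type*) {k : Type*} [CommRing O] [Field k] [Algebra O k] (c : kˣ) :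
    Subalgebra O (Matrix (Fin 2) (Fin 2) k) where
  carrier := {A | A 0 0 ∈ (algebraMap O k).range ∧ c * A 0 1 ∈ (algebraMap O k).range ∧
    ↑c⁻¹ * A 1 0 ∈ (algebraMap O k).range ∧ A 1 1 ∈ (algebraMap O k).range}
  mul_mem' := by
    rintro A B ⟨a0, a1, a2, a3⟩ ⟨b0, b1, b2, b3⟩
    have hc : (c : k) * ↑c⁻¹ = 1 := c.mul_inv
    simp only [Set.mem_ofPred_eq, mul_apply, Fin.sum_univ_two]
    refine ⟨?_, ?_, ?_, ?_⟩
    · convert add_mem (mul_mem a0 b0) (mul_mem a1 b2) using 1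
      linear_combination -(A 0 1 * B 1 0) * hc
    · convert add_mem (mul_mem a0 b1) (mul_mem a1 b3) using 1
      ring
    · convert add_mem (mul_mem a2 b0) (mul_mem a3 b2) using 1
      ring
    · convert add_mem (mul_mem a2 b1) (mul_mem a3 b3) using 1
      linear_combination -(A 1 0 * B 0 1) * hc
  add_mem' := by
    rintro A B ⟨a0, a1, a2, a3⟩ ⟨b0, b1, b2, b3⟩
    simp only [Set.mem_ofPred_eq, Matrix.add_apply, mul_add]
    exact ⟨add_mem a0 b0, add_mem a1 b1, add_mem a2 b2, add_mem a3 b3⟩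
  algebraMap_mem' r := by
    simp [algebraMap_eq_diagonal, -RingHom.mem_range, zero_mem, RingHom.mem_range_self]

variable {O k : Type*} [CommRing O] [Field k] [Algebra O k] {c : kˣ}

theorem mem_standardOrder {A : Matrix (Fin 2) (Fin 2) k} :
    A ∈ standardOrder O c ↔ A 0 0 ∈ (algebraMap O k).range ∧
      c * A 0 1 ∈ (algebraMap O k).range ∧ ↑c⁻¹ * A 1 0 ∈ (algebraMap O k).range ∧
      A 1 1 ∈ (algebraMap O k).range :=
  Iff.rfl

theorem single_zero_zero_mem_standardOrder : single 0 0 1 ∈ standardOrder O c := by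
  simp [mem_standardOrder]

theorem single_one_one_mem_standardOrder : single 1 1 1 ∈ standardOrder O c := by
  simp [mem_standardOrder]

theorem single_zero_one_mem_standardOrder : single 0 1 ↑c⁻¹ ∈ standardOrder O c := by
  simp [mem_standardOrder]

theorem single_one_zero_mem_standardOrder : single 1 0 ↑c ∈ standardOrder O c := by
  simp [mem_standardOrder]

theorem toSubmodule_standardOrder :
    Subalgebra.toSubmodule (standardOrder O c) = Submodule.span O
      {single 0 0 1, single 0 1 (↑c⁻¹ : k), single 1 0 (c : k), single 1 1 1} := by
  refine le_antisymm (fun A hA => ?_) (Submodule.span_le.mpr ?_)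
  · obtain ⟨⟨a, ha⟩, ⟨b, hb⟩, ⟨d, hd⟩, ⟨e, he⟩⟩ := mem_standardOrder.mp hA
    have hA : A = a • single 0 0 1 + b • single 0 1 (↑c⁻¹ : k) + d • single 1 0 (c : k) +
        e • single 1 1 1 := by
      ext i j
      fin_cases i <;> fin_cases j <;>
        simp [← algebraMap_smul (A := k), ha, hb, hd, he] <;> field_simp
    rw [hA]
    refine add_mem (add_mem (add_mem ?_ ?_) ?_) ?_ <;>
      exact Submodule.smul_mem _ _ (Submodule.subset_span (by simp))
  · rintro _ (rfl | rfl | rfl | rfl)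
    exacts [single_zero_zero_mem_standardOrder, single_zero_one_mem_standardOrder,
      single_one_zero_mem_standardOrder, single_one_one_mem_standardOrder]

theorem isOrderM2_standardOrder : IsOrderM2 O k (standardOrder O c) := by
  refine ⟨?_, Matrix.span_eq_top_of_forall_single_mem ?_⟩
  · rw [toSubmodule_standardOrder]
    exact Submodule.fg_span (Set.toFinite _)
  simp only [Fin.forall_fin_two]
  exact ⟨⟨⟨1, one_ne_zero, single_zero_zero_mem_standardOrder⟩,
      ⟨_, Units.ne_zero _, single_zero_one_mem_standardOrder⟩⟩,
    ⟨⟨_, c.ne_zero, single_one_zero_mem_standardOrder⟩,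
      ⟨1, one_ne_zero, single_one_one_mem_standardOrder⟩⟩⟩

theorem mem_inf_standardOrder_iff {π : O} {d : kˣ} (hcd : (d : k) = algebraMap O k π * c)
    {A : Matrix (Fin 2) (Fin 2) k} :
    A ∈ standardOrder O c ⊓ standardOrder O d ↔ A 0 0 ∈ (algebraMap O k).range ∧
      ↑c * A 0 1 ∈ (algebraMap O k).range ∧ ↑d⁻¹ * A 1 0 ∈ (algebraMap O k).range ∧
      A 1 1 ∈ (algebraMap O k).range := by
  have hπ0 : algebraMap O k π ≠ 0 := by
    rintro h
    exact d.ne_zero (by rw [hcd, h, zero_mul])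
  have hπ : algebraMap O k π ∈ (algebraMap O k).range := ⟨π, rfl⟩
  have h01 : ↑d * A 0 1 = algebraMap O k π * (c * A 0 1) := by rw [hcd, mul_assoc]
  have h10 : ↑c⁻¹ * A 1 0 = algebraMap O k π * (↑d⁻¹ * A 1 0) := by
    rw [Units.val_inv_eq_inv_val, Units.val_inv_eq_inv_val, hcd]
    field_simp
  rw [Algebra.mem_inf, mem_standardOrder, mem_standardOrder, h01, h10]
  constructor
  · rintro ⟨⟨a0, a1, -, a3⟩, -, -, a2, -⟩
    exact ⟨a0, a1, a2, a3⟩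
  · rintro ⟨a0, a1, a2, a3⟩
    exact ⟨⟨a0, a1, mul_mem hπ a2, a3⟩, a0, mul_mem hπ a1, a2, a3⟩

variable [IsIntegrallyClosed O] [IsFractionRing O k]

theorem le_standardOrder {S : Subalgebra O (Matrix (Fin 2) (Fin 2) k)}
    (hS : (Subalgebra.toSubmodule S).FG) (h0 : single 0 0 1 ∈ S) (h1 : single 1 1 1 ∈ S)
    (h01 : ∀ A ∈ S, ↑c * A 0 1 ∈ (algebraMap O k).range)
    (h10 : ∀ A ∈ S, ↑c⁻¹ * A 1 0 ∈ (algebraMap O k).range) : S ≤ standardOrder O c :=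
  fun A hA => ⟨apply_mem_range_of_mem hS h0 hA, h01 A hA, h10 A hA,
    apply_mem_range_of_mem hS h1 hA⟩

theorem isMaximalOrderM2_standardOrder : IsMaximalOrderM2 O k (standardOrder O c) := by
  refine ⟨isOrderM2_standardOrder, fun S hS hle => le_antisymm hle ?_⟩
  have h0 := hle single_zero_zero_mem_standardOrder
  have h1 := hle single_one_one_mem_standardOrder
  refine le_standardOrder hS.1 h0 h1 (fun A hA => ?_) (fun A hA => ?_)
  · simpa [mul_comm] using
      apply_mul_apply_mem_range_of_mem hS.1 h0 h1 hA (hle single_one_zero_mem_standardOrder)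
  · simpa using
      apply_mul_apply_mem_range_of_mem hS.1 h0 h1 (hle single_zero_one_mem_standardOrder) hA

end StandardOrder

section Uniformizer

variable {O k : Type*} [CommRing O] [Field k] [Algebra O k] [IsFractionRing O k] {π : O}

theorem inv_uniformizer_not_mem (hπ : Irreducible π) :
    (algebraMap O k π)⁻¹ ∉ (algebraMap O k).range := by
  rintro ⟨t, ht⟩
  have hπ0 : algebraMap O k π ≠ 0 :=
    (map_ne_zero_iff _ (IsFractionRing.injective O k)).mpr hπ.ne_zero
  refine hπ.not_isUnit (IsUnit.of_mul_eq_one t (IsFractionRing.injective O k ?_))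
  rw [map_mul, ht, mul_inv_cancel₀ hπ0, map_one]

variable [IsDomain O] [IsDiscreteValuationRing O]

theorem exists_inv_eq_uniformizer_mul (hπ : Irreducible π) {x : k}
    (hx : x ∉ (algebraMap O k).range) :
    ∃ r : O, x⁻¹ = algebraMap O k π * algebraMap O k r := by
  obtain ⟨r, hr⟩ | ⟨r, hr⟩ := ValuationRing.isInteger_or_isInteger O x
  · exact absurd ⟨r, hr⟩ hx
  have hr_nonunit : ¬IsUnit r := fun hu => hx ⟨↑hu.unit⁻¹, by
    rw [map_units_inv, IsUnit.unit_spec, hr, inv_inv]⟩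
  have hr_mem : r ∈ IsLocalRing.maximalIdeal O := hr_nonunit
  rw [(IsDiscreteValuationRing.irreducible_iff_uniformizer π).mp hπ,
    Ideal.mem_span_singleton'] at hr_mem
  obtain ⟨s, rfl⟩ := hr_mem
  exact ⟨s, by rw [← hr, map_mul, mul_comm]⟩

theorem uniformizer_mul_mul_not_mem (hπ : Irreducible π) {x y : k}
    (hx : x ∉ (algebraMap O k).range) (hy : y ∉ (algebraMap O k).range) :
    algebraMap O k π * (x * y) ∉ (algebraMap O k).range := by
  rintro ⟨t, ht⟩
  obtain ⟨r, hr⟩ := exists_inv_eq_uniformizer_mul hπ hx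
  have hx0 : x ≠ 0 := by
    rintro rfl
    exact hx (zero_mem _)
  refine hy ⟨t * r, ?_⟩
  rw [map_mul, ht]
  linear_combination (-(x * y)) * hr + y * mul_inv_cancel₀ hx0

end Uniformizer

section LevelOne

variable {O k : Type*} [CommRing O] [Field k] [Algebra O k] [IsFractionRing O k] {π : O}
  {c d : kˣ}

theorem standardOrder_inf_ne_left (hπ : Irreducible π) (hcd : (d : k) = algebraMap O k π * c) :
    standardOrder O c ⊓ standardOrder O d ≠ standardOrder O c := by
  intro h
  have hmem := (mem_inf_standardOrder_iff hcd).mp (h ▸ single_one_zero_mem_standardOrder)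
  refine inv_uniformizer_not_mem (k := k) hπ ?_
  convert hmem.2.2.1 using 1
  simp [hcd]
  field_simp

theorem standardOrder_inf_ne_right (hπ : Irreducible π) (hcd : (d : k) = algebraMap O k π * c) :
    standardOrder O c ⊓ standardOrder O d ≠ standardOrder O d := by
  intro h
  have hmem := (mem_inf_standardOrder_iff hcd).mp (h ▸ single_zero_one_mem_standardOrder)
  refine inv_uniformizer_not_mem (k := k) hπ ?_
  convert hmem.2.1 using 1
  simp [hcd]

variable [IsDomain O] [IsDiscreteValuationRing O]

theorem eq_standardOrder_or_eq_of_inf_le (hπ : Irreducible π)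
    (hcd : (d : k) = algebraMap O k π * c) {M : Subalgebra O (Matrix (Fin 2) (Fin 2) k)}
    (hM : IsMaximalOrderM2 O k M) (hle : standardOrder O c ⊓ standardOrder O d ≤ M) :
    M = standardOrder O c ∨ M = standardOrder O d := by
  have hmem : ∀ {A}, _ → A ∈ M := fun hA => hle ((mem_inf_standardOrder_iff hcd).mpr hA)
  have h0 : single 0 0 1 ∈ M := hmem (by simp)
  have h1 : single 1 1 1 ∈ M := hmem (by simp)
  have hd01 : ∀ A ∈ M, ↑d * A 0 1 ∈ (algebraMap O k).range := fun A hA => by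
    simpa [mul_comm] using
      apply_mul_apply_mem_range_of_mem hM.1.1 h0 h1 hA (hmem (A := single 1 0 ↑d) (by simp))
  have hc10 : ∀ A ∈ M, ↑c⁻¹ * A 1 0 ∈ (algebraMap O k).range := fun A hA => by
    simpa using
      apply_mul_apply_mem_range_of_mem hM.1.1 h0 h1 (hmem (A := single 0 1 ↑c⁻¹) (by simp)) hA
  by_cases hc01 : ∀ A ∈ M, ↑c * A 0 1 ∈ (algebraMap O k).range
  · exact .inl (hM.2 _ isOrderM2_standardOrder (le_standardOrder hM.1.1 h0 h1 hc01 hc10))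
  obtain ⟨A, hA, hA01⟩ := not_forall₂.mp hc01
  refine .inr (hM.2 _ isOrderM2_standardOrder (le_standardOrder hM.1.1 h0 h1 hd01 ?_))
  intro B hB
  by_contra hB10
  apply uniformizer_mul_mul_not_mem hπ hA01 hB10
  convert apply_mul_apply_mem_range_of_mem hM.1.1 h0 h1 hA hB using 1
  have hπ0 : algebraMap O k π ≠ 0 :=
    (map_ne_zero_iff _ (IsFractionRing.injective O k)).mpr hπ.ne_zero
  rw [Units.val_inv_eq_inv_val, hcd]
  field_simp

end LevelOne

/-- A split local order `[[O_k, π^{-m}O_k],[π^n O_k, O_k]]` of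
level `n - m = 1` is the intersection of exactly two maximal orders of `M₂(k)`. -/
theorem stmt7 (k : Type*) [Field k] (O : Type*) [CommRing O] [IsDomain O]
    [IsDiscreteValuationRing O] [Algebra O k] [IsFractionRing O k]
    (π : O) (hπ : Irreducible π) (m n : ℤ) (hlevel : n - m = 1)
    (E : Subalgebra O (Matrix (Fin 2) (Fin 2) k))
    (hE : ∀ A : Matrix (Fin 2) (Fin 2) k,
      A ∈ E ↔
        A 0 0 ∈ (algebraMap O k).range ∧
        (algebraMap O k π) ^ m * A 0 1 ∈ (algebraMap O k).range ∧
        (algebraMap O k π) ^ (-n) * A 1 0 ∈ (algebraMap O k).range ∧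
        A 1 1 ∈ (algebraMap O k).range) :
    ∃ M₁ M₂ : Subalgebra O (Matrix (Fin 2) (Fin 2) k),
      IsMaximalOrderM2 O k M₁ ∧ IsMaximalOrderM2 O k M₂ ∧ M₁ ≠ M₂ ∧
      E = M₁ ⊓ M₂ ∧
      ∀ M₁' M₂' : Subalgebra O (Matrix (Fin 2) (Fin 2) k),
        IsMaximalOrderM2 O k M₁' → IsMaximalOrderM2 O k M₂' → E = M₁' ⊓ M₂' →
          ({M₁', M₂'} : Set (Subalgebra O (Matrix (Fin 2) (Fin 2) k))) = {M₁, M₂} := by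
  have hπ0 : algebraMap O k π ≠ 0 :=
    (map_ne_zero_iff _ (IsFractionRing.injective O k)).mpr hπ.ne_zero
  set u := Units.mk0 _ hπ0
  have hcd : ((u ^ n : kˣ) : k) = algebraMap O k π * ↑(u ^ m) := by
    rw [show n = m + 1 by omega, _root_.zpow_add_one, Units.val_mul, mul_comm]
    rfl
  have hE' : E = standardOrder O (u ^ m) ⊓ standardOrder O (u ^ n) := by
    ext A
    rw [hE, mem_inf_standardOrder_iff hcd]
    simp [u, Units.val_zpow_eq_zpow_val, _root_.zpow_neg]
  refine ⟨_, _, isMaximalOrderM2_standardOrder, isMaximalOrderM2_standardOrder,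
    fun h => standardOrder_inf_ne_left hπ hcd (by rw [← h, inf_idem]), hE',
    fun M₁ M₂ h₁ h₂ h => Set.pair_eq_pair_of_inf_eq
      (fun M hM hle => eq_standardOrder_or_eq_of_inf_le hπ hcd hM hle)
      (standardOrder_inf_ne_left hπ hcd) (standardOrder_inf_ne_right hπ hcd) h₁ h₂
      (h.symm.trans hE')⟩
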